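/- The Kirkwood-Dirac frame representation of states, channels and effects is empirically adequate (reproduces the law of total probability): for every linear map ℰ : M_d(ℂ) → M_d(ℂ) and all d×d complex matrices E and ρ, ∑_{i,i'=1}^d ∑_{j,j'=1}^d Tr(E D_{j,j'}) · Tr(F_{j,j'} ℰ(D_{i,i'})) · Tr(F_{i,i'} ρ) = Tr(E ℰ(ρ)). -/
import Mathlib


open scoped BigOperators
open Matrix

/-- Inner product on `ℂ^d`, conjugate-linear in the first argument. -/
noncomputable def dotc {d : ℕ} (x y : Fin d → ℂ) : ℂ := ∑ k, star (x k) * y k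

/-- `a` is an orthonormal basis of `ℂ^d` (d vectors, pairwise orthonormal). -/
def IsONB {d : ℕ} (a : Fin d → Fin d → ℂ) : Prop :=
  ∀ i j, dotc (a i) (a j) = if i = j then 1 else 0

/-- The Kirkwood-Dirac distribution entry ϱ_{ij}(ρ) = ⟨b_j|a_i⟩⟨a_i|ρ|b_j⟩. -/
noncomputable def KD {d : ℕ} (a b : Fin d → Fin d → ℂ)
    (ρ : Matrix (Fin d) (Fin d) ℂ) (i j : Fin d) : ℂ :=
  dotc (b j) (a i) * dotc (a i) (ρ.mulVec (b j))

/-- The outer product |u⟩⟨v| as a d×d matrix. -/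
noncomputable def outer {d : ℕ} (u v : Fin d → ℂ) : Matrix (Fin d) (Fin d) ℂ :=
  Matrix.of fun k l => u k * star (v l)

/-- The KD frame operator F_{i,i'} = |a'_{i'}⟩⟨a'_{i'}| · |a_i⟩⟨a_i|. -/
noncomputable def KDF {d : ℕ} (a a' : Fin d → Fin d → ℂ) (i i' : Fin d) :
    Matrix (Fin d) (Fin d) ℂ :=
  outer (a' i') (a' i') * outer (a i) (a i)

/-- The KD dual frame operator D_{i,i'} = |a_i⟩⟨a'_{i'}| / ⟨a'_{i'}|a_i⟩. -/
noncomputable def KDD {d : ℕ} (a a' : Fin d → Fin d → ℂ) (i i' : Fin d) :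
    Matrix (Fin d) (Fin d) ℂ :=
  (dotc (a' i') (a i))⁻¹ • outer (a i) (a' i')


lemma onb_complete {d : ℕ} (a : Fin d → Fin d → ℂ) (ha : IsONB a) (m k : Fin d) :
    ∑ i, star (a i m) * a i k = if m = k then 1 else 0 := by
  let A : Matrix (Fin d) (Fin d) ℂ := Matrix.of a
  have h1 : A * Aᴴ = 1 := by
    ext i j
    have := ha j i
    simpa [A, Matrix.mul_apply, Matrix.conjTranspose_apply, Matrix.one_apply, dotc,
      mul_comm, eq_comm] using this
  have h2 : Aᴴ * A = 1 := mul_eq_one_comm.mp h1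
  have := congrFun (congrFun h2 m) k
  simpa [A, Matrix.mul_apply, Matrix.conjTranspose_apply, Matrix.one_apply] using this

lemma trace_KDF {d : ℕ} (a a' : Fin d → Fin d → ℂ) (i i' : Fin d)
    (X : Matrix (Fin d) (Fin d) ℂ) :
    (KDF a a' i i' * X).trace = dotc (a' i') (a i) * dotc (a i) (X.mulVec (a' i')) := by
  simp only [KDF, outer, dotc, Matrix.trace, Matrix.diag, Matrix.mul_apply, Matrix.of_apply,
    Matrix.mulVec, dotProduct, Finset.mul_sum, Finset.sum_mul]
  rw [Finset.sum_comm]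
  refine Finset.sum_congr rfl fun m _ => Finset.sum_congr rfl fun k _ =>
    Finset.sum_congr rfl fun n _ => ?_
  ring

lemma recon {d : ℕ} (a a' : Fin d → Fin d → ℂ) (ha : IsONB a) (ha' : IsONB a')
    (hne : ∀ i i', dotc (a' i') (a i) ≠ 0) (X : Matrix (Fin d) (Fin d) ℂ) :
    ∑ i, ∑ i', (KDF a a' i i' * X).trace • KDD a a' i i' = X := by
  have step : ∀ i i', (KDF a a' i i' * X).trace • KDD a a' i i'
      = dotc (a i) (X.mulVec (a' i')) • outer (a i) (a' i') := by
    intro i i'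
    rw [trace_KDF, KDD, smul_smul]
    congr 1
    field_simp [hne i i']
  simp only [step]
  ext k l
  simp only [Matrix.sum_apply, Matrix.smul_apply, outer, Matrix.of_apply, smul_eq_mul,
    dotc, Matrix.mulVec, dotProduct, Finset.sum_mul, Finset.mul_sum]
  have : ∀ i : Fin d, ∑ i' : Fin d, ∑ m : Fin d, ∑ n : Fin d,
      star (a i m) * (X m n * a' i' n) * (a i k * star (a' i' l))
      = ∑ m : Fin d, star (a i m) * X m l * a i k := by
    intro i
    rw [Finset.sum_comm]
    refine Finset.sum_congr rfl fun m _ => ?_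
    have : ∑ i' : Fin d, ∑ n : Fin d,
        star (a i m) * (X m n * a' i' n) * (a i k * star (a' i' l))
        = ∑ n : Fin d, (star (a i m) * X m n * a i k) * star (∑ i' : Fin d, star (a' i' n) * a' i' l) := by
      rw [Finset.sum_comm]
      refine Finset.sum_congr rfl fun n _ => ?_
      simp only [star_sum, star_mul', star_star, Finset.mul_sum]
      refine Finset.sum_congr rfl fun i' _ => ?_
      ring
    rw [this]
    simp only [onb_complete a' ha']
    simp [Finset.sum_ite_eq', apply_ite, mul_ite]
  simp only [this]
  rw [Finset.sum_comm]
  have : ∀ m : Fin d, ∑ i : Fin d, star (a i m) * X m l * a i k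
      = X m l * ∑ i : Fin d, star (a i m) * a i k := by
    intro m
    rw [Finset.mul_sum]
    refine Finset.sum_congr rfl fun i _ => by ring
  simp only [this, onb_complete a ha]
  simp

lemma recon_trace {d : ℕ} (a a' : Fin d → Fin d → ℂ) (ha : IsONB a) (ha' : IsONB a')
    (hne : ∀ i i', dotc (a' i') (a i) ≠ 0) (M X : Matrix (Fin d) (Fin d) ℂ) :
    ∑ i, ∑ i', (KDF a a' i i' * X).trace * (M * KDD a a' i i').trace = (M * X).trace := by
  conv_rhs => rw [← recon a a' ha ha' hne X]
  rw [Matrix.mul_sum, Matrix.trace_sum]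
  refine Finset.sum_congr rfl fun i _ => ?_
  rw [Matrix.mul_sum, Matrix.trace_sum]
  refine Finset.sum_congr rfl fun i' _ => ?_
  rw [Matrix.mul_smul, Matrix.trace_smul, smul_eq_mul, mul_comm]

/-- the KD frame representation of states, channels and effects
is empirically adequate: ∑ ξ(E|j,j') Γ(j,j'|i,i',ℰ) μ(i,i'|ρ) = Tr(E ℰ(ρ)). -/
theorem kd_empirically_adequate {d : ℕ} (hd : 0 < d) (a a' : Fin d → Fin d → ℂ)
    (ha : IsONB a) (ha' : IsONB a') (hne : ∀ i i', dotc (a' i') (a i) ≠ 0)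
    (ℰ : Matrix (Fin d) (Fin d) ℂ →ₗ[ℂ] Matrix (Fin d) (Fin d) ℂ)
    (E ρ : Matrix (Fin d) (Fin d) ℂ) :
    (∑ i, ∑ i', ∑ j, ∑ j',
        (E * KDD a a' j j').trace * (KDF a a' j j' * ℰ (KDD a a' i i')).trace *
          (KDF a a' i i' * ρ).trace)
      = (E * ℰ ρ).trace := by
  have hin : ∀ i i', (∑ j, ∑ j',
      (E * KDD a a' j j').trace * (KDF a a' j j' * ℰ (KDD a a' i i')).trace *
        (KDF a a' i i' * ρ).trace)
      = (E * ℰ (KDD a a' i i')).trace * (KDF a a' i i' * ρ).trace := by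
    intro i i'
    rw [← recon_trace a a' ha ha' hne E (ℰ (KDD a a' i i')), Finset.sum_mul]
    refine Finset.sum_congr rfl fun j _ => ?_
    rw [Finset.sum_mul]
    refine Finset.sum_congr rfl fun j' _ => ?_
    ring
  simp only [hin]
  conv_rhs => rw [← recon a a' ha ha' hne ρ]
  simp only [map_sum, _root_.map_smul, Matrix.mul_sum, Matrix.trace_sum, Matrix.mul_smul,
    Matrix.trace_smul, smul_eq_mul]
  exact Finset.sum_congr rfl fun i _ => Finset.sum_congr rfl fun i' _ => mul_comm _ _
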